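/- arXiv:1111.6088 — 4 statements merged into one kernel-verified Lean document; each statement's English description precedes it below -/
import Mathlib

section
/- Let f : ℍ → ℍ be a function on the real quaternions. Suppose f is quaternion-differentiable on the left at every point, i.e., for every q ∈ ℍ there exists d ∈ ℍ such that h⁻¹·(f(q + h) − f(q)) tends to d as h tends to 0 through nonzero quaternions. Then there exist quaternions a, b ∈ ℍ such that f(q) = a + q·b for all q ∈ ℍ. -/
/-!
Let `D q` be the left derivative of `f` at `q`; then `f` is real-differentiable with derivative
`h ↦ h * D q`. Letting `ℂ ⊆ ℍ` act on `ℍ` by left multiplication, `f` is holomorphic on every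
complex line `y + ℂ` with derivative `D`. Hence `D` is again holomorphic on these lines, with
derivative `C` say, and Cauchy's estimates make `D` and `C` continuous. Conjugating by `w`
carries `ℂ` to the complex line through any direction, so `D` has directional derivative
`v * C y` along every `v`, and therefore has derivative `h ↦ h * C y`. The second derivative
`(h, k) ↦ k * (h * C y)` of `f` is symmetric, so `(j * i - i * j) * C y = 0`, i.e. `C = 0`.
Hence `D` is a constant `b` and `f q - q * b` is constant.
-/

open Filter Set Topology Asymptotics Quaternion

theorem hasFDerivAt_mul_flip_of_tendsto_inv_mul {A : Type*} [NormedDivisionRing A]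
    [NormedAlgebra ℝ A] {f : A → A} {q d : A}
    (hf : Tendsto (fun h => h⁻¹ * (f (q + h) - f q)) (𝓝[≠] 0) (𝓝 d)) :
    HasFDerivAt f ((ContinuousLinearMap.mul ℝ A).flip d) q := by
  rw [hasFDerivAt_iff_isLittleO_nhds_zero, ← nhdsNE_sup_pure, isLittleO_sup]
  refine ⟨?_, by simp [IsLittleO_def, IsBigOWith_def]⟩
  have hsmall : (fun h => h⁻¹ * (f (q + h) - f q) - d) =o[𝓝[≠] 0] (fun _ => (1 : A)) :=
    (isLittleO_one_iff A).mpr (tendsto_sub_nhds_zero_iff.mpr hf)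
  refine ((isBigO_refl (fun h : A => h) _).mul_isLittleO hsmall).congr' ?_ (by simp)
  filter_upwards [self_mem_nhdsWithin] with h (hh : h ≠ 0)
  simp [mul_sub, ← mul_assoc, mul_inv_cancel₀ hh]

theorem hasFDerivAt_of_hasLineDerivAt_of_continuousAt {E F : Type*} [NormedAddCommGroup E]
    [NormedSpace ℝ E] [NormedAddCommGroup F] [NormedSpace ℝ F] {f : E → F} {L : E → E →L[ℝ] F}
    {x : E} (hf : ∀ y v, HasLineDerivAt ℝ f (L y v) y v) (hL : ContinuousAt L x) :
    HasFDerivAt f (L x) x := by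
  rw [hasFDerivAt_iff_isLittleO_nhds_zero, isLittleO_iff]
  intro ε hε
  obtain ⟨δ, hδ, hclose⟩ := Metric.continuousAt_iff.mp hL ε hε
  filter_upwards [Metric.ball_mem_nhds 0 hδ] with v hv
  have hderiv : ∀ t : ℝ, HasDerivAt (fun t : ℝ => f (x + t • v) - t • L x v)
      (L (x + t • v) v - L x v) t := by
    intro t
    have hshift : HasDerivAt (fun s => f (x + t • v + (s - t) • v)) (L (x + t • v) v) t :=
      HasDerivAt.comp_sub_const t t (by rw [sub_self]; exact hf (x + t • v) v)
    refine (hshift.congr_of_eventuallyEq (Eventually.of_forall fun s => ?_)).sub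
      ((hasDerivAt_id t).smul_const (L x v) |>.congr_deriv (one_smul _ _))
    simp [add_assoc, ← add_smul]
  have hbound : ∀ t ∈ Ico (0 : ℝ) 1, ‖L (x + t • v) v - L x v‖ ≤ ε * ‖v‖ := by
    intro t ht
    have hnear : dist (x + t • v) x < δ := by
      rw [dist_eq_norm, add_sub_cancel_left, norm_smul, Real.norm_of_nonneg ht.1]
      rw [mem_ball_zero_iff] at hv
      nlinarith [ht.2, norm_nonneg v]
    rw [← sub_apply]
    refine (ContinuousLinearMap.le_opNorm _ _).trans (mul_le_mul_of_nonneg_right ?_ (norm_nonneg _))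
    exact (dist_eq_norm (L (x + t • v)) (L x) ▸ hclose hnear).le
  simpa [sub_right_comm] using norm_image_sub_le_of_norm_deriv_le_segment_01'
    (fun t _ => (hderiv t).hasDerivWithinAt) hbound

namespace Quaternion

lemma norm_coeComplex (z : ℂ) : ‖(z : ℍ)‖ = ‖z‖ := by
  rw [← sq_eq_sq₀ (norm_nonneg _) (norm_nonneg _), sq, ← normSq_eq_norm_mul_self,
    Complex.sq_norm, normSq_def', Complex.normSq_apply]
  simp [sq]

@[fun_prop]
lemma continuous_coeComplex : Continuous (coeComplex : ℂ → ℍ) :=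
  (LinearMap.toContinuousLinearMap ofComplex.toLinearMap).continuous

/- With `m = v.im` and `r = ‖m‖`, `w = r - m * i` satisfies `w * (v.re + r * i) = v * w`
because `m * m = -r ^ 2`; it vanishes only when `m = -r * i`, where `v` is itself complex. -/
lemma exists_mul_coeComplex_mul_inv_eq (v : ℍ) : ∃ w ≠ 0, ∃ z : ℂ, w * z * w⁻¹ = v := by
  set r := ‖v.im‖
  have hr : r ^ 2 = v.imI ^ 2 + v.imJ ^ 2 + v.imK ^ 2 := by
    rw [sq, ← normSq_eq_norm_mul_self]
    simp [normSq_def']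
  by_cases hw : (r : ℍ) - v.im * (Complex.I : ℍ) = 0
  · refine ⟨1, one_ne_zero, ⟨v.re, -r⟩, ?_⟩
    have hI : r + v.imI = 0 := by simpa using congrArg (·.re) hw
    have hJ : v.imJ = 0 := by simpa using congrArg (·.imK) hw
    have hK : v.imK = 0 := by simpa using congrArg (·.imJ) hw
    ext <;> simp <;> linarith
  · refine ⟨_, hw, ⟨v.re, r⟩, ?_⟩
    rw [mul_inv_eq_iff_eq_mul₀ hw]
    ext <;> simp <;> nlinarith

lemma exists_mul_ne_mul : ∃ a b : ℍ, a * b ≠ b * a := by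
  have hij : (⟨0, 1, 0, 0⟩ : ℍ) * (⟨0, 0, 1, 0⟩ : ℍ) ≠ (⟨0, 0, 1, 0⟩ : ℍ) * (⟨0, 1, 0, 0⟩ : ℍ) :=
    fun h => by norm_num at h
  exact ⟨_, _, hij⟩

/-- `f (q + h) = f q + h * D q + o(h)` at every `q`. -/
def HasLeftDeriv (f D : ℍ → ℍ) : Prop :=
  ∀ q, HasFDerivAt f ((ContinuousLinearMap.mul ℝ ℍ).flip (D q)) q

noncomputable def innerConj (w : ℍ) (G : ℍ → ℍ) : ℍ → ℍ := fun p => w⁻¹ * G (w * p * w⁻¹) * w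

variable {f D : ℍ → ℍ}

lemma HasLeftDeriv.continuous (hf : HasLeftDeriv f D) : Continuous f :=
  continuous_iff_continuousAt.mpr fun q => (hf q).continuousAt

lemma HasLeftDeriv.conj {w : ℍ} (hf : HasLeftDeriv f D) (hw : w ≠ 0) :
    HasLeftDeriv (innerConj w f) (innerConj w D) := by
  intro p
  have hin := ((hasFDerivAt_id (𝕜 := ℝ) p).const_mul w).mul_const' w⁻¹
  have hout := ((hasFDerivAt_id (𝕜 := ℝ) (f (w * p * w⁻¹))).const_mul w⁻¹).mul_const' w
  refine (hout.comp p ((hf _).comp p hin)).congr_fderiv (ContinuousLinearMap.ext fun h => ?_)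
  simp [innerConj, mul_assoc, hw]

lemma HasLineDerivAt.of_innerConj {G : ℍ → ℍ} {w p v g : ℍ} (hw : w ≠ 0)
    (h : HasLineDerivAt ℝ (innerConj w G) g p v) :
    HasLineDerivAt ℝ G (w * g * w⁻¹) (w * p * w⁻¹) (w * v * w⁻¹) := by
  refine ((h.const_mul w).mul_const w⁻¹).congr_of_eventuallyEq (Eventually.of_forall fun t => ?_)
  simp [innerConj, mul_add, add_mul, mul_assoc, hw]

lemma HasLeftDeriv.eq_zero_of_hasLeftDeriv {C : ℍ → ℍ} (hf : HasLeftDeriv f D)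
    (hD : HasLeftDeriv D C) : C = 0 := by
  funext q
  have hD' : HasFDerivAt (fun y => (ContinuousLinearMap.mul ℝ ℍ).flip (D y))
      ((ContinuousLinearMap.mul ℝ ℍ).flip.comp ((ContinuousLinearMap.mul ℝ ℍ).flip (C q))) q :=
    (ContinuousLinearMap.mul ℝ ℍ).flip.hasFDerivAt.comp q (hD q)
  obtain ⟨a, b, hab⟩ := exists_mul_ne_mul
  have hsymm : (b * a - a * b) * C q = 0 := by
    rw [sub_mul, sub_eq_zero, mul_assoc, mul_assoc]
    exact second_derivative_symmetric hf hD' a b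
  simpa [sub_ne_zero.mpr hab.symm] using hsymm

lemma HasLeftDeriv.eq_add_mul {b : ℍ} (hf : HasLeftDeriv f fun _ => b) (q : ℍ) :
    f q = f 0 + q * b := by
  have hzero : ∀ p, HasFDerivAt (fun p => f p - p * b) (0 : ℍ →L[ℝ] ℍ) p := fun p =>
    ((hf p).sub ((ContinuousLinearMap.mul ℝ ℍ).flip b).hasFDerivAt).congr_fderiv (sub_self _)
  have := is_const_of_fderiv_eq_zero (fun p => (hzero p).differentiableAt)
    (fun p => (hzero p).fderiv) q 0
  simpa [sub_eq_iff_eq_add, add_comm] using this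

section ComplexSlices

noncomputable local instance : NormedSpace ℂ ℍ :=
  { Module.compHom ℍ ofComplex.toRingHom with
    norm_smul_le := fun z q => (norm_mul_le _ _).trans_eq (by rw [← norm_coeComplex]; rfl) }

local instance : IsScalarTower ℝ ℂ ℍ :=
  ⟨fun r z q => show ((r • z : ℂ) : ℍ) * q = r • ((z : ℍ) * q) by
    rw [← smul_mul_assoc, ← coe_ofComplex, map_smul]⟩

lemma complex_smul_eq_coe_mul (z : ℂ) (q : ℍ) : z • q = (z : ℍ) * q := rfl

noncomputable def sliceDeriv (G : ℍ → ℍ) (y : ℍ) : ℍ := deriv (fun z : ℂ => G (y + z)) 0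

lemma HasLeftDeriv.hasDerivAt_slice (hf : HasLeftDeriv f D) (y : ℍ) (z : ℂ) :
    HasDerivAt (fun w : ℂ => f (y + w)) (D (y + z)) z := by
  have hcoe : HasFDerivAt (fun w : ℂ => y + (w : ℍ))
      (LinearMap.toContinuousLinearMap ofComplex.toLinearMap) z :=
    (LinearMap.toContinuousLinearMap ofComplex.toLinearMap).hasFDerivAt.const_add y
  rw [hasDerivAt_iff_hasFDerivAt]
  refine hasFDerivAt_of_restrictScalars ℝ ((hf (y + z)).comp z hcoe) ?_
  ext w <;> simp [complex_smul_eq_coe_mul]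

lemma HasLeftDeriv.differentiable_slice (hf : HasLeftDeriv f D) (y : ℍ) :
    Differentiable ℂ fun z : ℂ => f (y + z) :=
  fun z => (hf.hasDerivAt_slice y z).differentiableAt

lemma HasLeftDeriv.differentiable_slice_deriv (hf : HasLeftDeriv f D) (y : ℍ) :
    Differentiable ℂ fun z : ℂ => D (y + z) := by
  have h := (hf.differentiable_slice y).deriv
  rwa [funext fun z => (hf.hasDerivAt_slice y z).deriv] at h

lemma HasLeftDeriv.sliceDeriv_eq (hf : HasLeftDeriv f D) : sliceDeriv f = D :=
  funext fun y => by simpa [sliceDeriv] using (hf.hasDerivAt_slice y 0).deriv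

lemma hasLineDerivAt_of_differentiable_slice {G : ℍ → ℍ} {y : ℍ}
    (hG : Differentiable ℂ fun z : ℂ => G (y + z)) (z : ℂ) :
    HasLineDerivAt ℝ G ((z : ℍ) * sliceDeriv G y) y z := by
  have hline : HasDerivAt (fun t : ℝ => (t : ℂ) * z) z 0 := by
    simpa using (hasDerivAt_id (0 : ℝ)).ofReal_comp.mul_const z
  have h := (hG 0).hasDerivAt.scomp_of_eq 0 hline (by simp)
  rw [complex_smul_eq_coe_mul] at h
  refine h.congr_of_eventuallyEq (Eventually.of_forall fun t => ?_)
  simp [← coe_real_complex_mul]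

lemma continuous_sliceDeriv {G : ℍ → ℍ} (hG : Continuous G)
    (hd : ∀ y, Differentiable ℂ fun z : ℂ => G (y + z)) : Continuous (sliceDeriv G) := by
  refine continuous_iff_continuousAt.mpr fun y₀ => Metric.tendsto_nhds.mpr fun ε hε => ?_
  have hunif := Metric.tendstoUniformly_iff.mp (Continuous.tendstoUniformly
    (fun (y : ℍ) (z : Metric.sphere (0 : ℂ) 1) => G (y + z)) (by fun_prop) y₀) (ε / 2)
    (by positivity)
  filter_upwards [hunif] with y hy
  have hcauchy := Complex.norm_deriv_le_of_forall_mem_sphere_norm_le one_pos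
    ((hd y).sub (hd y₀)).diffContOnCl (C := ε / 2) fun z hz => by
      simpa [dist_eq_norm, norm_sub_rev] using (hy ⟨z, hz⟩).le
  rw [deriv_sub (hd y 0) (hd y₀ 0)] at hcauchy
  rw [dist_eq_norm, sliceDeriv, sliceDeriv]
  linarith

lemma HasLeftDeriv.hasLineDerivAt (hf : HasLeftDeriv f D) (y v : ℍ) :
    HasLineDerivAt ℝ D (v * sliceDeriv D y) y v := by
  obtain ⟨w, hw, z, rfl⟩ := exists_mul_coeComplex_mul_inv_eq v
  set p := w⁻¹ * y * w
  have hp : w * p * w⁻¹ = y := by simp [p, mul_assoc, hw]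
  have hconj := (hf.conj hw).differentiable_slice_deriv p
  have hz := (hasLineDerivAt_of_differentiable_slice hconj z).of_innerConj hw
  have hone := (hasLineDerivAt_of_differentiable_slice hconj 1).of_innerConj hw
  have hslice : w * sliceDeriv (innerConj w D) p * w⁻¹ = sliceDeriv D y := by
    have := hasLineDerivAt_of_differentiable_slice (hf.differentiable_slice_deriv y) 1
    simp only [hp, coeComplex_one, one_mul, mul_one, mul_inv_cancel₀ hw] at hone this
    exact hone.unique this
  rw [hp] at hz
  convert hz using 1
  simp [← hslice, mul_assoc, hw]

lemma HasLeftDeriv.hasLeftDeriv_sliceDeriv (hf : HasLeftDeriv f D) :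
    HasLeftDeriv D (sliceDeriv D) := by
  have hDc : Continuous D :=
    hf.sliceDeriv_eq ▸ continuous_sliceDeriv hf.continuous hf.differentiable_slice
  have hCc := continuous_sliceDeriv hDc hf.differentiable_slice_deriv
  exact fun q => hasFDerivAt_of_hasLineDerivAt_of_continuousAt hf.hasLineDerivAt
    ((ContinuousLinearMap.mul ℝ ℍ).flip.continuous.comp hCc).continuousAt

end ComplexSlices

lemma HasLeftDeriv.hasLeftDeriv_zero (hf : HasLeftDeriv f D) : HasLeftDeriv D fun _ => 0 := by
  have hDC := hf.hasLeftDeriv_sliceDeriv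
  rwa [hf.eq_zero_of_hasLeftDeriv hDC] at hDC

end Quaternion

/-- If `f : ℍ → ℍ` is quaternion-differentiable on the left at every point,
then `f q = a + q * b` for some fixed quaternions `a, b`. -/
theorem stmt_2 (f : Quaternion ℝ → Quaternion ℝ)
    (hf : ∀ q : Quaternion ℝ, ∃ d : Quaternion ℝ,
      Filter.Tendsto (fun h : Quaternion ℝ => h⁻¹ * (f (q + h) - f q))
        (nhdsWithin 0 {0}ᶜ) (nhds d)) :
    ∃ a b : Quaternion ℝ, ∀ q : Quaternion ℝ, f q = a + q * b := by
  choose D hD using hf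
  have hfD : HasLeftDeriv f D := fun q => hasFDerivAt_mul_flip_of_tendsto_inv_mul (hD q)
  have hDconst : D = fun _ => D 0 :=
    funext fun q => by simpa using hfD.hasLeftDeriv_zero.eq_add_mul q
  exact ⟨f 0, D 0, (hDconst ▸ hfD).eq_add_mul⟩
end

section
/- There is no associative unital ℝ-algebra D which is a division ring and which contains elements i, j with i² = −1 and j² = −1 such that the family (1, i, j) is a basis of D as a real vector space. In other words, the 'Theory of Triplets' is impossible: no three-dimensional real division algebra exists with two independent square roots of −1 together with 1 spanning it. -/
/-- There is no associative unital real division algebra containing `i, j`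
with `i² = j² = -1` such that `(1, i, j)` is a basis over `ℝ` (the 'Theory of Triplets'
is impossible). -/
theorem stmt_6 (D : Type*) [DivisionRing D] [Algebra ℝ D] (i j : D)
    (hi : i ^ 2 = -1) (hj : j ^ 2 = -1) :
    ¬ (LinearIndependent ℝ ![(1 : D), i, j] ∧
        Submodule.span ℝ (Set.range ![(1 : D), i, j]) = ⊤) := by
  rintro ⟨hli, hsp⟩
  have hmem : i * j ∈ Submodule.span ℝ (Set.range ![(1 : D), i, j]) := by
    rw [hsp]; trivial
  rw [Submodule.mem_span_range_iff_exists_fun] at hmem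
  obtain ⟨g, hg⟩ := hmem
  simp only [Fin.sum_univ_three, Matrix.cons_val_zero, Matrix.cons_val_one, Matrix.head_cons,
    Matrix.cons_val_two, Matrix.tail_cons] at hg
  set a := g 0; set b := g 1; set c := g 2
  -- hg : a • 1 + b • i + c • j = i * j
  have e1 : i * i = -1 := by rw [← sq]; exact hi
  have e2 : i * (i * j) = -j := by rw [← mul_assoc, e1, neg_one_mul]
  have h4 : (-j : D) = a • i + b • (-1 : D) + c • (i * j) := by
    rw [← e2]
    nth_rewrite 1 [← hg]
    rw [← e1]
    simp only [mul_add, mul_smul_comm, mul_one]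
  have h5 : (-j : D) = (c * a - b) • (1 : D) + (a + c * b) • i + (c * c) • j := by
    rw [h4, ← hg]
    simp only [smul_add, smul_smul, smul_neg, smul_eq_mul]
    module
  have key : (c * a - b) • (1 : D) + (a + c * b) • i + (c * c + 1) • j = -j + j := by
    rw [h5]; module
  rw [neg_add_cancel] at key
  have hz := Fintype.linearIndependent_iff.mp hli ![c * a - b, a + c * b, c * c + 1]
    (by simpa [Fin.sum_univ_three] using key) 2
  simp at hz
  nlinarith [sq_nonneg c]
end

section
/- Every finite-dimensional associative division algebra over the real numbers is isomorphic as an ℝ-algebra to ℝ, to ℂ, or to the quaternions ℍ. (Frobenius's theorem, 1877.) -/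
/-!
Every element of `D` generates a finite field extension of `ℝ`, hence a copy of `ℝ` or `ℂ`.
So if `D ≠ ℝ` there is an `i` with `i² = -1`, and its centralizer is `ℝ[i]`. Conjugation by `i`
splits `D` into a part commuting and a part anticommuting with `i`. If the second part vanishes,
`D = ℝ[i] ≅ ℂ`. Otherwise a nonzero anticommuting `m` has `m²` a negative real, a rescaling `j`
of `m` satisfies `j² = -1`, `ij = -ji`, and `D = ℝ[i] + ℝ[i] j ≅ ℍ`.
-/

open scoped IsMulCommutative
open Complex Algebra

theorem Complex.algHom_apply_eq_add_smul {A : Type*} [Ring A] [Algebra ℝ A] (φ : ℂ →ₐ[ℝ] A)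
    (z : ℂ) : φ z = algebraMap ℝ A z.re + z.im • φ I := by
  have hφ : φ = liftAux (φ I) (by rw [← map_mul, I_mul_I, map_neg, map_one]) :=
    algHom_ext (liftAux_apply_I _ _).symm
  exact (DFunLike.congr_fun hφ z).trans (liftAux_apply _ _ z)

theorem mem_bot_or_mem_range_complex {D : Type*} [Ring D] [IsDomain D] [Algebra ℝ D] {x : D}
    (hx : IsIntegral ℝ x) : x ∈ (⊥ : Subalgebra ℝ D) ∨ ∃ φ : ℂ →ₐ[ℝ] D, x ∈ φ.range := by
  have := finite_adjoin_simple_of_isIntegral hx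
  let := fieldOfFiniteDimensional ℝ ℝ[x]
  let x' : ℝ[x] := ⟨x, self_mem_adjoin_singleton ℝ x⟩
  rcases Real.nonempty_algEquiv_or ℝ[x] with ⟨⟨e⟩⟩ | ⟨⟨e⟩⟩
  · refine .inl (mem_bot.mpr ⟨e x', ?_⟩)
    simpa [x'] using (congrArg Subtype.val (e.symm.commutes (e x'))).symm
  · exact .inr ⟨ℝ[x].val.comp e.symm, e x', by simp [x']⟩

theorem exists_add_commute_anticommute {A : Type*} [Ring A] [Algebra ℝ A] {i : A}
    (hi : i * i = -1) (x : A) : ∃ p m : A, x = p + m ∧ Commute i p ∧ i * m = -(m * i) := by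
  have hii : ∀ w : A, i * (i * w) = -w := fun w => by rw [← mul_assoc, hi, neg_one_mul]
  refine ⟨(2 : ℝ)⁻¹ • (x - i * x * i), (2 : ℝ)⁻¹ • (x + i * x * i), ?_, ?_, ?_⟩
  · rw [← smul_add, sub_add_add_cancel, ← two_smul ℝ, smul_smul, inv_mul_cancel₀ two_ne_zero,
      one_smul]
  · refine Commute.smul_right ?_ _
    simp only [Commute, SemiconjBy, mul_sub, sub_mul, mul_assoc, hii, hi, mul_neg, mul_one]
    abel
  · rw [mul_smul_comm, smul_mul_assoc, ← smul_neg]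
    simp only [mul_add, add_mul, mul_assoc, hii, hi, mul_neg, mul_one, neg_add, neg_neg]
    rw [add_comm]

section

variable {D : Type*} [Ring D] [IsDomain D] [Algebra ℝ D] [Algebra.IsIntegral ℝ D] {i : D}

theorem mem_adjoin_of_commute (hi : i * i = -1) {x : D} (hx : Commute i x) : x ∈ ℝ[i] := by
  rcases mem_bot_or_mem_range_complex (Algebra.IsIntegral.isIntegral (R := ℝ) x)
    with hbot | ⟨φ, hφx⟩
  · exact bot_le (a := ℝ[i]) hbot
  obtain ⟨z, rfl⟩ := φ.mem_range.mp hφx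
  rw [algHom_apply_eq_add_smul] at hx ⊢
  by_cases him : z.im = 0
  · simp [him]
  have hu : Commute i (φ I) := by
    have := (hx.sub_right (commute_algebraMap_right z.re i)).smul_right z.im⁻¹
    rwa [add_sub_cancel_left, smul_smul, inv_mul_cancel₀ him, one_smul] at this
  have hφI : φ I * φ I = i * i := by rw [← map_mul, I_mul_I, map_neg, map_one, hi]
  have hi_mem : i ∈ ℝ[i] := self_mem_adjoin_singleton ℝ i
  refine add_mem (algebraMap_mem _ _) (Subalgebra.smul_mem _ ?_ _)
  rcases hu.symm.mul_self_eq_mul_self_iff.mp hφI with h | h <;> rw [h]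
  · exact hi_mem
  · exact neg_mem hi_mem

theorem exists_mul_self_eq_algebraMap_of_anticommute (hi : i * i = -1) {m : D}
    (hm : i * m = -(m * i)) (hm0 : m ≠ 0) : ∃ a : ℝ, m * m = algebraMap ℝ D a := by
  have hcomm : Commute i (m * m) := by
    rw [Commute, SemiconjBy, ← mul_assoc, hm, neg_mul, mul_assoc, hm, mul_neg, neg_neg, mul_assoc]
  have hmem := mem_adjoin_of_commute hi hcomm
  rw [← range_liftAux i hi] at hmem
  obtain ⟨z, hz⟩ := hmem
  rw [AlgHom.toRingHom_eq_coe, RingHom.coe_coe, liftAux_apply] at hz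
  refine ⟨z.re, ?_⟩
  -- conjugation by `m` fixes `m * m` and negates `i`
  suffices him : z.im = 0 by rw [← hz, him, zero_smul, add_zero]
  have hmi : m * i ≠ 0 := mul_ne_zero hm0 (by rintro rfl; simp at hi)
  have h : m * (m * m) = (m * m) * m := (mul_assoc m m m).symm
  rw [← hz, mul_add, add_mul, mul_smul_comm, smul_mul_assoc, ← commutes, hm, smul_neg,
    add_right_inj, eq_neg_iff_add_eq_zero, ← two_smul ℝ, smul_smul] at h
  simpa [hmi] using h

theorem exists_sqrt_neg_one_anticommute (hi : i * i = -1) {m : D} (hm : i * m = -(m * i))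
    (hm0 : m ≠ 0) : ∃ j : D, j * j = -1 ∧ i * j = -(j * i) := by
  obtain ⟨a, ha⟩ := exists_mul_self_eq_algebraMap_of_anticommute hi hm hm0
  have ha_neg : a < 0 := by
    by_contra! ha_nonneg
    have : m * m = algebraMap ℝ D √a * algebraMap ℝ D √a := by
      rw [← map_mul, Real.mul_self_sqrt ha_nonneg, ha]
    have hcomm : Commute i m := by
      rcases ((commute_algebraMap_right √a m).mul_self_eq_mul_self_iff.mp this) with h | h <;>
        rw [h]
      · exact commute_algebraMap_right _ _
      · exact (commute_algebraMap_right _ _).neg_right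
    have hmi : m * i ≠ 0 := mul_ne_zero hm0 (by rintro rfl; simp at hi)
    have h : (2 : ℝ) • (m * i) = 0 := by
      rw [two_smul]
      nth_rewrite 1 [← hcomm.eq]
      rw [hm, neg_add_cancel]
    simp [hmi] at h
  refine ⟨(√(-a))⁻¹ • m, ?_, ?_⟩
  · have hscalar : (√(-a))⁻¹ * (√(-a))⁻¹ * a = -1 := by
      rw [← mul_inv, Real.mul_self_sqrt (by linarith)]
      field_simp [ha_neg.ne]
    rw [smul_mul_smul_comm, ha, algebraMap_eq_smul_one, smul_smul, hscalar, neg_one_smul]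
  · rw [mul_smul_comm, smul_mul_assoc, hm, smul_neg]

theorem adjoin_eq_top_of_anticommute (hi : i * i = -1) {j : D} (hj : j * j = -1)
    (hij : i * j = -(j * i)) : adjoin ℝ {i, j, i * j} = ⊤ := by
  refine Algebra.eq_top_iff.mpr fun x => ?_
  obtain ⟨p, m, rfl, hp, hm⟩ := exists_add_commute_anticommute hi x
  have hmj : Commute i (m * j) := by
    rw [Commute, SemiconjBy, ← mul_assoc, hm, neg_mul, mul_assoc, hij, mul_neg, neg_neg, mul_assoc]
  have hm_eq : m = -((m * j) * j) := by rw [mul_assoc, hj, mul_neg_one, neg_neg]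
  have hle : ℝ[i] ≤ adjoin ℝ {i, j, i * j} := adjoin_mono (by simp)
  have hj_mem : j ∈ adjoin ℝ {i, j, i * j} := subset_adjoin (by simp)
  rw [hm_eq]
  exact add_mem (hle (mem_adjoin_of_commute hi hp))
    (neg_mem (mul_mem (hle (mem_adjoin_of_commute hi hmj)) hj_mem))

end

def quaternionBasis {A : Type*} [Ring A] [Algebra ℝ A] {i j : A} (hi : i * i = -1)
    (hj : j * j = -1) (hij : i * j = -(j * i)) : QuaternionAlgebra.Basis A (-1 : ℝ) 0 (-1) where
  i := i
  j := j
  k := i * j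
  i_mul_i := by rw [hi, zero_smul, add_zero, neg_one_smul]
  j_mul_j := by rw [hj, neg_one_smul]
  i_mul_j := rfl
  j_mul_i := by rw [zero_smul, zero_sub, hij, neg_neg]

theorem nonempty_algEquiv_of_range_eq_top {A B : Type*} [DivisionRing A] [Ring B] [Nontrivial B]
    [Algebra ℝ A] [Algebra ℝ B] (f : A →ₐ[ℝ] B) (hf : f.range = ⊤) : Nonempty (B ≃ₐ[ℝ] A) :=
  ⟨(AlgEquiv.ofBijective f ⟨f.toRingHom.injective, (f.range_eq_top).mp hf⟩).symm⟩

/-- Frobenius, 1877: Every finite-dimensional associative division algebra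
over `ℝ` is isomorphic as an `ℝ`-algebra to `ℝ`, `ℂ`, or the quaternions `ℍ`. -/
theorem stmt_7 (D : Type*) [DivisionRing D] [Algebra ℝ D] [FiniteDimensional ℝ D] :
    Nonempty (D ≃ₐ[ℝ] ℝ) ∨ Nonempty (D ≃ₐ[ℝ] ℂ) ∨ Nonempty (D ≃ₐ[ℝ] Quaternion ℝ) := by
  by_cases hR : (⊥ : Subalgebra ℝ D) = ⊤
  · exact .inl (nonempty_algEquiv_of_range_eq_top (Algebra.ofId ℝ D) (by rwa [range_ofId]))
  obtain ⟨x, -, hx⟩ := SetLike.exists_of_lt (lt_top_iff_ne_top.mpr hR)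
  obtain ⟨φ, -⟩ := (mem_bot_or_mem_range_complex (Algebra.IsIntegral.isIntegral x)).resolve_left hx
  have hi : φ I * φ I = -1 := by rw [← map_mul, I_mul_I, map_neg, map_one]
  by_cases hC : ℝ[φ I] = ⊤
  · exact .inr (.inl (nonempty_algEquiv_of_range_eq_top _ ((range_liftAux _ hi).trans hC)))
  obtain ⟨y, -, hy⟩ := SetLike.exists_of_lt (lt_top_iff_ne_top.mpr hC)
  obtain ⟨p, m, rfl, hp, hm⟩ := exists_add_commute_anticommute hi y
  have hm0 : m ≠ 0 := by
    rintro rfl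
    exact hy (by simpa using mem_adjoin_of_commute hi hp)
  obtain ⟨j, hj, hij⟩ := exists_sqrt_neg_one_anticommute hi hm hm0
  exact .inr (.inr (nonempty_algEquiv_of_range_eq_top (quaternionBasis hi hj hij).liftHom
    ((QuaternionAlgebra.Basis.range_liftHom _).trans (adjoin_eq_top_of_anticommute hi hj hij))))
end

section
/- Let (aₙ) be a sequence of real quaternions and let R > 0 be such that the series Σ_{n=0}^{∞} ‖aₙ‖·rⁿ converges for every 0 ≤ r < R. Let I be a real quaternion with I² = −1. Then the power series f(q) = Σ_{n=0}^{∞} qⁿ·aₙ is slice-regular on the slice L_I inside the ball of radius R: for all real x, y with x² + y² < R², writing g(x, y) = Σ_{n=0}^{∞} (x + y·I)ⁿ·aₙ, the equation ∂g/∂x + I·(∂g/∂y) = 0 holds, where the partial derivatives are the derivatives of the corresponding one-real-variable functions t ↦ Σ (t + y·I)ⁿ·aₙ at t = x and t ↦ Σ (x + t·I)ⁿ·aₙ at t = y. -/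
/-!
On the slice `L_I` the point `q = x + yI` moves along the lines `t ↦ c + t • d` with `d = 1` or
`d = I`, and `d` commutes with `c`. Hence `(c + t • d) ^ n` has derivative `n • d (c + t • d) ^ (n - 1)`,
and since `∑ n ‖aₙ‖ r ^ (n - 1)` converges for `r < R`, the series may be differentiated term by term.
Both partial derivatives are therefore `d * S` with the same `S = ∑ n • q ^ (n - 1) aₙ`, so that
`∂ₓ g + I ∂ᵧ g = (1 + I²) S = 0`.
-/

theorem HasDerivAt.fun_pow_of_commute {𝕜 𝔸 : Type*} [NontriviallyNormedField 𝕜] [NormedRing 𝔸]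
    [NormedAlgebra 𝕜 𝔸] {f : 𝕜 → 𝔸} {f' : 𝔸} {x : 𝕜} (h : HasDerivAt f f' x)
    (hc : Commute f' (f x)) (n : ℕ) :
    HasDerivAt (fun t ↦ f t ^ n) (n • (f' * f x ^ (n - 1))) x := by
  convert h.fun_pow' n using 1
  rw [Finset.sum_congr rfl (g := fun _ ↦ f' * f x ^ (n - 1)), Finset.sum_const, Finset.card_range]
  intro i hi
  rw [← (hc.pow_right _).eq, mul_assoc, ← pow_add, Nat.pred_eq_sub_one,
    Nat.sub_add_cancel (Nat.le_sub_one_of_lt (Finset.mem_range.mp hi))]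

theorem summable_nat_mul_norm_mul_pow_sub_one {E : Type*} [SeminormedAddCommGroup E]
    {b : ℕ → E} {r m : ℝ} (hr : 0 < r) (hrm : r < m) (hb : Summable fun n ↦ ‖b n‖ * m ^ n) :
    Summable fun n : ℕ ↦ n * ‖b n‖ * r ^ (n - 1) := by
  have hm : 0 < m := hr.trans hrm
  obtain ⟨C, hC⟩ := (tendsto_self_mul_const_pow_of_lt_one (div_nonneg hr.le hm.le)
    ((div_lt_one hm).mpr hrm)).bddAbove_range
  have hpow : Summable fun n : ℕ ↦ n * ‖b n‖ * r ^ n := by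
    refine (hb.mul_left C).of_nonneg_of_le (fun n ↦ by positivity) fun n ↦ ?_
    have hn : (n : ℝ) * (r / m) ^ n ≤ C := hC (Set.mem_range_self n)
    calc (n : ℝ) * ‖b n‖ * r ^ n = (n * (r / m) ^ n) * (‖b n‖ * m ^ n) := by
          rw [div_pow]; field_simp
      _ ≤ C * (‖b n‖ * m ^ n) := by gcongr
  refine (hpow.div_const r).congr fun n ↦ ?_
  rcases n with _ | n
  · simp
  · rw [Nat.add_sub_cancel, pow_succ]
    field_simp

section PowerSeriesAlongLine

variable {A : Type*} [NormedRing A] [NormOneClass A]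

theorem norm_pow_mul_le_of_norm_le {q b : A} {r : ℝ} (hq : ‖q‖ ≤ r) (n : ℕ) :
    ‖q ^ n * b‖ ≤ ‖b‖ * r ^ n :=
  calc ‖q ^ n * b‖ ≤ ‖q‖ ^ n * ‖b‖ := (norm_mul_le _ _).trans (by gcongr; exact norm_pow_le _ _)
    _ ≤ ‖b‖ * r ^ n := by rw [mul_comm]; gcongr

theorem norm_nsmul_pow_sub_one_mul_le {q b : A} {r : ℝ} (hq : ‖q‖ ≤ r) (n : ℕ) :
    ‖n • (q ^ (n - 1) * b)‖ ≤ n * ‖b‖ * r ^ (n - 1) :=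
  calc ‖n • (q ^ (n - 1) * b)‖ ≤ n * ‖q ^ (n - 1) * b‖ := norm_nsmul_le
    _ ≤ n * (‖b‖ * r ^ (n - 1)) := by gcongr; exact norm_pow_mul_le_of_norm_le hq _
    _ = n * ‖b‖ * r ^ (n - 1) := by ring

variable [NormedAlgebra ℝ A] [CompleteSpace A]

theorem hasDerivAt_tsum_add_smul_pow_mul (a : ℕ → A) {R : ℝ}
    (hconv : ∀ r : ℝ, 0 ≤ r → r < R → Summable fun n ↦ ‖a n‖ * r ^ n)
    {c d : A} (hcd : Commute d c) {t₀ : ℝ} (ht₀ : ‖c + t₀ • d‖ < R) :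
    HasDerivAt (fun t : ℝ ↦ ∑' n, (c + t • d) ^ n * a n)
      (d * ∑' n, n • ((c + t₀ • d) ^ (n - 1) * a n)) t₀ := by
  set u : ℝ → A := fun t ↦ c + t • d
  obtain ⟨r, hur, hrR⟩ := exists_between ht₀
  obtain ⟨m, hrm, hmR⟩ := exists_between hrR
  have hr : 0 < r := (norm_nonneg _).trans_lt hur
  have hbound := summable_nat_mul_norm_mul_pow_sub_one hr hrm (hconv m (hr.trans hrm).le hmR)
  set s : Set ℝ := u ⁻¹' Metric.ball 0 r
  have hs : IsOpen s := Metric.isOpen_ball.preimage (by fun_prop)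
  have hs' : IsPreconnected s :=
    (((convex_ball (0 : A) r).translate_preimage_right c).is_linear_preimage
      (IsLinearMap.isLinearMap_smul' d)).isPreconnected
  have hderiv : ∀ n t, t ∈ s → HasDerivAt (fun t ↦ u t ^ n * a n)
      (d * n • (u t ^ (n - 1) * a n)) t := by
    intro n t _
    have hu : HasDerivAt u d t :=
      (((hasDerivAt_id t).smul_const d).const_add c).congr_deriv (one_smul ℝ d)
    convert (hu.fun_pow_of_commute (hcd.add_right ((Commute.refl d).smul_right t)) n).mul_const
      (a n) using 1
    rw [smul_mul_assoc, mul_smul_comm, mul_assoc]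
  have hsum : Summable fun n ↦ n • (u t₀ ^ (n - 1) * a n) :=
    hbound.of_norm_bounded fun n ↦ norm_nsmul_pow_sub_one_mul_le hur.le n
  rw [← hsum.tsum_mul_left]
  refine hasDerivAt_tsum_of_isPreconnected (hbound.mul_left ‖d‖) hs hs' hderiv
    (fun n t ht ↦ ?_) (mem_ball_zero_iff.mpr hur)
    ((hconv r hr.le hrR).of_norm_bounded fun n ↦ norm_pow_mul_le_of_norm_le hur.le n)
    (mem_ball_zero_iff.mpr hur)
  exact (norm_mul_le _ _).trans
    (by gcongr; exact norm_nsmul_pow_sub_one_mul_le (mem_ball_zero_iff.mp ht).le n)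

end PowerSeriesAlongLine

theorem Quaternion.normSq_eq_one_of_sq_eq_neg_one {I : Quaternion ℝ} (hI : I ^ 2 = -1) :
    Quaternion.normSq I = 1 := by
  have h := congrArg Quaternion.normSq hI
  rw [map_pow, Quaternion.normSq_neg, map_one] at h
  exact (pow_eq_one_iff_of_nonneg (Quaternion.normSq_nonneg) two_ne_zero).mp h

theorem Quaternion.norm_coe_add_coe_mul_sq_of_sq_eq_neg_one {I : Quaternion ℝ} (hI : I ^ 2 = -1) (x y : ℝ) :
    ‖(x : Quaternion ℝ) + y * I‖ ^ 2 = x ^ 2 + y ^ 2 := by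
  have h1 := Quaternion.normSq_eq_one_of_sq_eq_neg_one hI
  have hre : I.re = 0 := Quaternion.sq_eq_neg_normSq.mp (by rw [h1, Quaternion.coe_one, hI])
  rw [sq, ← Quaternion.normSq_eq_norm_mul_self, Quaternion.normSq_add]
  simp [hre, h1, Quaternion.normSq_coe]

/-- For a quaternion `I` with `I² = -1` and a power series `Σ qⁿ aₙ` whose
coefficients satisfy `Σ ‖aₙ‖ rⁿ < ∞` for all `0 ≤ r < R`, the sum is slice-regular on the
slice `L_I` inside the ball of radius `R`. -/
theorem stmt_15 (a : ℕ → Quaternion ℝ) (R : ℝ) (hR : 0 < R)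
    (hconv : ∀ r : ℝ, 0 ≤ r → r < R → Summable (fun n : ℕ => ‖a n‖ * r ^ n))
    (I : Quaternion ℝ) (hI : I ^ 2 = -1)
    (x y : ℝ) (hxy : x ^ 2 + y ^ 2 < R ^ 2) :
    deriv (fun t : ℝ =>
        ∑' n : ℕ, ((t : Quaternion ℝ) + (y : Quaternion ℝ) * I) ^ n * a n) x
      + I * deriv (fun t : ℝ =>
        ∑' n : ℕ, ((x : Quaternion ℝ) + (t : Quaternion ℝ) * I) ^ n * a n) y
      = 0 := by
  have hq : ‖(x : Quaternion ℝ) + y * I‖ < R :=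
    lt_of_pow_lt_pow_left₀ 2 hR.le (by rwa [Quaternion.norm_coe_add_coe_mul_sq_of_sq_eq_neg_one hI])
  have h₁ := hasDerivAt_tsum_add_smul_pow_mul a hconv (Commute.one_left (y * I : Quaternion ℝ))
    (t₀ := x) (by rwa [← Quaternion.coe_mul_eq_smul, mul_one, add_comm])
  have h₂ := hasDerivAt_tsum_add_smul_pow_mul a hconv (Quaternion.coe_commute x I).symm
    (t₀ := y) (by rwa [← Quaternion.coe_mul_eq_smul])
  have hswap : ∀ t : ℝ, (y * I : Quaternion ℝ) + t = t + y * I := fun t ↦ add_comm _ _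
  simp only [← Quaternion.coe_mul_eq_smul, mul_one, hswap] at h₁ h₂
  rw [h₁.deriv, h₂.deriv, ← mul_assoc, ← sq, hI, one_mul, neg_one_mul, add_neg_cancel]
end
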